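/- Let α = a_1…a_r be a reduced word given by its tower decomposition and b a positive integer such that b α is reduced, and let b_0, b_1, …, b_s be the track sequence of b through α. Then every element of passwords(b, α), namely each word a_1…a_i b_i a_{i+1}…a_r for 0 ≤ i ≤ s, is a reduced word representing the same permutation as b α. -/

import Mathlib

/-- The adjacent transposition `sᵢ = (i, i+1)` as a permutation of `ℕ`. -/
def sGen (i : ℕ) : Equiv.Perm ℕ := Equiv.swap i (i + 1)

/-- The permutation represented by a word. -/
def toPerm (w : List ℕ) : Equiv.Perm ℕ := (w.map sGen).prod

/-- A word is reduced (of minimal length among words representing the same permutation). -/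
def IsReducedWord (w : List ℕ) : Prop := ∀ v : List ℕ, toPerm v = toPerm w → w.length ≤ v.length

/-- `w` is a reduced word for the permutation `ω`. -/
def IsReducedWordOf (w : List ℕ) (ω : Equiv.Perm ℕ) : Prop :=
  toPerm w = ω ∧ ∀ v : List ℕ, toPerm v = ω → w.length ≤ v.length

/-- The relation `<₁`: `β` is obtained from `α` by swapping two adjacent letters
`x, y` with `y ≥ x + 2` (the smaller letter moves right). -/
def Rel1 (α β : List ℕ) : Prop :=
  ∃ (p q : List ℕ) (x y : ℕ), x + 2 ≤ y ∧
    α = p ++ x :: y :: q ∧ β = p ++ y :: x :: q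

/-- Lexicographic order (non-strict) on words. -/
def LexLe (α β : List ℕ) : Prop := α = β ∨ List.Lex (· < ·) α β

/-- A tower word: a nonempty increasing run of consecutive integers. -/
def IsTowerWord (a : List ℕ) : Prop := a ≠ [] ∧ a.Chain' (fun x y => y = x + 1)

/-- First letter of a tower word. -/
def inn (a : List ℕ) : ℕ := a.headI

/-- Last letter of a tower word. -/
def fin' (a : List ℕ) : ℕ := a.getLastD 0

/-- `L` is the tower decomposition of `w`: a factorization into maximal tower words. -/
def IsTowerDecomp (w : List ℕ) (L : List (List ℕ)) : Prop :=
  L.flatten = w ∧ (∀ a ∈ L, IsTowerWord a) ∧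
    L.Chain' (fun a b => inn b ≠ fin' a + 1)

/-- The relation `<₂`: a directed long-braid move of a tower word past its left neighbour. -/
def Rel2 (α β : List ℕ) : Prop :=
  ∃ (A B : List (List ℕ)) (a b b1 b2 : List ℕ),
    IsTowerDecomp α (A ++ a :: b :: B) ∧
    inn a ≤ inn b ∧ inn b < fin' b ∧ fin' b < fin' a ∧
    IsTowerWord b1 ∧ (b2 = [] ∨ IsTowerWord b2) ∧ b1 ++ b2 = b ∧
    β = A.flatten ++ (b1.map (· + 1)) ++ a ++ b2 ++ B.flatten

/-- The directed-braid order: reflexive-transitive closure of `<₁ ∪ <₂`. -/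
def DBraid : List ℕ → List ℕ → Prop :=
  Relation.ReflTransGen (fun α β => Rel1 α β ∨ Rel2 α β)

/-- The natural word of `ω`: the reduced word whose tower decomposition has
strictly decreasing initial letters. -/
def IsNaturalWordOf (η : List ℕ) (ω : Equiv.Perm ℕ) : Prop :=
  IsReducedWordOf η ω ∧ ∃ L, IsTowerDecomp η L ∧ L.Chain' (fun a b => inn b < inn a)

/-- A natural basic word of `ω`: a reduced word whose tower decomposition satisfies
`fin(aᵢ) > in(aᵢ₊₁)` for all `i`. -/
def IsNaturalBasicOf (β : List ℕ) (ω : Equiv.Perm ℕ) : Prop :=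
  IsReducedWordOf β ω ∧ ∃ L, IsTowerDecomp β L ∧ L.Chain' (fun a b => inn b < fin' a)

/-- One step of the track of a letter `b` through a tower word `a`. -/
def trackStep (a : List ℕ) (b : ℕ) : Option ℕ :=
  if inn a < b ∧ b ≤ fin' a then some (b - 1)
  else if b + 2 ≤ inn a ∨ fin' a + 2 ≤ b then some b
  else none

/-- The track sequence of `b` through a list of tower words. -/
def trackSeq : ℕ → List (List ℕ) → List ℕ
  | b, [] => [b]
  | b, a :: rest =>
    match trackStep a b with
    | none => [b]
    | some b' => b :: trackSeq b' rest

/-- The tower decomposition of a word, as a function. -/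
def towerDecomp : List ℕ → List (List ℕ)
  | [] => []
  | x :: xs =>
    match towerDecomp xs with
    | [] => [[x]]
    | t :: ts => if t.headI = x + 1 then (x :: t) :: ts else [x] :: t :: ts

/-! A tower word `s (s+1) … (s+m)` represents the cycle `s+m+1 ↦ s ↦ s+1 ↦ ⋯ ↦ s+m+1`.
Conjugating by this cycle shows that `s_b` can be moved to the right past it, becoming `s_{b-1}`
when `s < b ≤ s+m` and staying `s_b` when `b` is at distance at least two from the run. So each
word of `passwords(b, α)` represents the same permutation as `b α` and has the same length,
hence it is reduced whenever `b α` is. -/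

lemma toPerm_cons (x : ℕ) (w : List ℕ) : toPerm (x :: w) = sGen x * toPerm w := by
  simp [toPerm]

lemma toPerm_append (u v : List ℕ) : toPerm (u ++ v) = toPerm u * toPerm v := by
  simp [toPerm]

lemma IsReducedWordOf.of_toPerm_eq {w w' : List ℕ} {ω : Equiv.Perm ℕ} (hw : IsReducedWordOf w ω)
    (hperm : toPerm w' = toPerm w) (hlen : w'.length = w.length) : IsReducedWordOf w' ω :=
  ⟨hperm.trans hw.1, fun v hv => hlen ▸ hw.2 v hv⟩

lemma toPerm_range'_apply (s m n : ℕ) :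
    toPerm (List.range' s m) n =
      if n = s + m then s else if s ≤ n ∧ n < s + m then n + 1 else n := by
  induction m generalizing s with
  | zero =>
    simp only [List.range', toPerm, List.map_nil, List.prod_nil, Equiv.Perm.one_apply]
    split_ifs <;> omega
  | succ m ih =>
    rw [List.range'_succ, toPerm_cons, Equiv.Perm.mul_apply, ih]
    simp only [sGen, Equiv.swap_apply_def]
    split_ifs <;> omega

lemma sGen_mul_toPerm_range'_of_lt {s m b : ℕ} (hs : s < b) (hm : b < s + m) :
    sGen b * toPerm (List.range' s m) = toPerm (List.range' s m) * sGen (b - 1) := by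
  ext n
  simp only [Equiv.Perm.mul_apply, sGen, Equiv.swap_apply_def, toPerm_range'_apply]
  split_ifs <;> omega

lemma commute_sGen_toPerm_range' {s m b : ℕ} (h : b + 2 ≤ s ∨ s + m + 1 ≤ b) :
    Commute (sGen b) (toPerm (List.range' s m)) := by
  ext n
  simp only [Equiv.Perm.mul_apply, sGen, Equiv.swap_apply_def, toPerm_range'_apply]
  split_ifs <;> omega

lemma IsTowerWord.eq_range' {a : List ℕ} (ha : IsTowerWord a) :
    a = List.range' (inn a) a.length := by
  induction a with
  | nil => exact absurd rfl ha.1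
  | cons x t ih =>
    cases t with
    | nil => rfl
    | cons y t =>
      obtain ⟨rfl, hchain⟩ := List.isChain_cons_cons.1 ha.2
      exact congrArg (x :: ·) (ih ⟨List.cons_ne_nil _ _, hchain⟩)

lemma IsTowerWord.exists_eq_range' {a : List ℕ} (ha : IsTowerWord a) :
    ∃ s m, a = List.range' s (m + 1) := by
  obtain ⟨m, hm⟩ := Nat.exists_eq_add_one.2 (List.length_pos_iff.2 ha.1)
  exact ⟨inn a, m, hm ▸ ha.eq_range'⟩

lemma inn_range' (s m : ℕ) : inn (List.range' s (m + 1)) = s := rfl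

lemma fin'_range' (s m : ℕ) : fin' (List.range' s (m + 1)) = s + m := by
  simp [fin', List.getLastD_eq_getLast?, List.getLast?_range']

lemma sGen_mul_toPerm_of_trackStep {a : List ℕ} (ha : IsTowerWord a) {b b' : ℕ}
    (h : trackStep a b = some b') : sGen b * toPerm a = toPerm a * sGen b' := by
  obtain ⟨s, m, rfl⟩ := ha.exists_eq_range'
  simp only [trackStep, inn_range', fin'_range'] at h
  split_ifs at h with hpass hfar <;> cases h
  · exact sGen_mul_toPerm_range'_of_lt hpass.1 (by omega)
  · exact commute_sGen_toPerm_range' (by omega)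

lemma toPerm_password_eq {L : List (List ℕ)} (hL : ∀ a ∈ L, IsTowerWord a) (b i : ℕ)
    (hi : i < (trackSeq b L).length) :
    toPerm ((L.take i).flatten ++ (trackSeq b L).getD i 0 :: (L.drop i).flatten) =
      toPerm (b :: L.flatten) := by
  induction L generalizing b i with
  | nil =>
    obtain rfl : i = 0 := by simpa [trackSeq] using hi
    rfl
  | cons a L ih =>
    cases htr : trackStep a b with
    | none =>
      obtain rfl : i = 0 := by simpa [trackSeq, htr] using hi
      simp [trackSeq, htr]
    | some b' =>
      cases i with
      | zero => simp [trackSeq, htr]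
      | succ i =>
        simp only [trackSeq, htr, List.length_cons, Nat.add_lt_add_iff_right] at hi
        have hrest := ih (fun x hx => hL x (List.mem_cons_of_mem a hx)) b' i hi
        simp only [trackSeq, htr, List.take_succ_cons, List.drop_succ_cons, List.flatten_cons,
          List.getD_cons_succ, List.append_assoc, toPerm_append, hrest, toPerm_cons]
        rw [← mul_assoc, ← mul_assoc, sGen_mul_toPerm_of_trackStep (hL a List.mem_cons_self) htr]

lemma length_take_flatten_append_cons (L : List (List ℕ)) (i c : ℕ) :
    ((L.take i).flatten ++ c :: (L.drop i).flatten).length = (c :: L.flatten).length := by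
  conv_rhs => rw [← List.take_append_drop i L]
  simp only [List.length_append, List.length_cons, List.flatten_append]
  omega

/-- every passage word of a letter `b` through a reduced word α
(given by its track sequence) is a reduced word representing the same permutation
as `b α`. -/
theorem passwords_reduced (ω : Equiv.Perm ℕ) (α : List ℕ) (b : ℕ)
    (L : List (List ℕ)) (hd : IsTowerDecomp α L)
    (hred : IsReducedWordOf (b :: α) ω) :
    ∀ i, i < (trackSeq b L).length →
      IsReducedWordOf
        ((L.take i).flatten ++ (trackSeq b L).getD i 0 :: (L.drop i).flatten) ω := by
  intro i hi
  obtain ⟨rfl, htower, -⟩ := hd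
  exact hred.of_toPerm_eq (toPerm_password_eq htower b i hi) (length_take_flatten_append_cons L i _)
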